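/- Let DB be an uncertain database all of whose existential probabilities lie in [0,1]. Then for every nonempty pattern α and every pattern β, expSup(α ++ β) ≤ expSup^cap(α); that is, expSup^cap of a pattern bounds from above the expected support of the pattern itself and of all its extensions. -/

import Mathlib

variable {I : Type*}

/-- An uncertain sequence: a finite list of (item, existential probability) pairs. -/
abbrev USeq (I : Type*) := List (I × ℝ)

/-- An uncertain database: a finite list of uncertain sequences. -/
abbrev UDB (I : Type*) := List (USeq I)

/-- `α` occurs in `S`: some sublist of `S` has item list `α`. -/
def Occurs (α : List I) (S : USeq I) : Prop :=
  ∃ o : USeq I, o.Sublist S ∧ o.map Prod.fst = α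

/-- Maximum occurrence probability of pattern `α` in `S`
(`0` if `α` has no occurrence in `S`; `1` for the empty pattern). -/
noncomputable def maxPrS [DecidableEq I] (α : List I) (S : USeq I) : ℝ :=
  WithBot.unbotD 0 ((S.sublists.filter fun o => decide (o.map Prod.fst = α)).map
      fun o => (o.map Prod.snd).prod).maximum

/-- Greedy projection: `projSeq α S = some S'` iff `α` occurs in `S`, in which case `S'`
is the suffix of `S` strictly after the last matched position of the greedy (leftmost)
occurrence of `α` in `S`.  For the empty pattern it is `S` itself. -/
def projSeq [DecidableEq I] : List I → USeq I → Option (USeq I)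
  | [], S => some S
  | _ :: _, [] => none
  | i :: α, (x, _) :: rest =>
      if x = i then projSeq α rest else projSeq (i :: α) rest

/-- The projected database `DB|α`. -/
def projDB [DecidableEq I] (α : List I) (DB : UDB I) : UDB I :=
  DB.filterMap (projSeq α)

/-- `P̂_D(i)`: maximum probability of an entry with item `i` over all sequences of `D`
(`0` if `i` occurs in no sequence of `D`). -/
noncomputable def Phat [DecidableEq I] (D : UDB I) (i : I) : ℝ :=
  WithBot.unbotD 0 ((D.flatten.filter fun e => decide (e.1 = i)).map Prod.snd).maximum

/-- `maxPr(α)` relative to `DB`: the product of per-step maximum probabilities over the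
successively projected databases. -/
noncomputable def maxPrDB [DecidableEq I] (DB : UDB I) (α : List I) : ℝ :=
  ∏ k : Fin α.length, Phat (projDB (α.take k.val) DB) (α.get k)

/-- Expected support of `α` in `DB`. -/
noncomputable def expSup [DecidableEq I] (DB : UDB I) (α : List I) : ℝ :=
  (DB.map fun S => maxPrS α S).sum

/-- `expSup^cap` of a nonempty pattern (junk value `0` on the empty pattern). -/
noncomputable def expSupCap [DecidableEq I] (DB : UDB I) (α : List I) : ℝ :=
  match α.getLast? with
  | none => 0
  | some i =>
      maxPrDB DB α.dropLast *
        ((projDB α.dropLast DB).map fun S' => maxPrS [i] S').sum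

/-- Number of sequences of `D` in which item `i` occurs. -/
def supCount [DecidableEq I] (D : UDB I) (i : I) : ℕ :=
  (D.filter fun S => decide (i ∈ S.map Prod.fst)).length

/-- `expSupport^top` of a nonempty pattern (junk value `0` on the empty pattern). -/
noncomputable def expSupTop [DecidableEq I] (DB : UDB I) (α : List I) : ℝ :=
  match α.getLast? with
  | none => 0
  | some i =>
      maxPrDB DB α.dropLast * Phat (projDB α.dropLast DB) i *
        (supCount (projDB α.dropLast DB) i : ℝ)

/-- Item `i` occurs in some sequence of `D`. -/
def ItemOccursIn (D : UDB I) (i : I) : Prop :=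
  ∃ S ∈ D, i ∈ S.map Prod.fst

/-- `sWeight`: average weight of the items of a pattern. -/
noncomputable def sWeight (w : I → ℝ) (α : List I) : ℝ :=
  (α.map w).sum / (α.length : ℝ)

/-- Maximum weight among the items of a pattern (`0` for the empty pattern). -/
noncomputable def mxWs (w : I → ℝ) (α : List I) : ℝ :=
  WithBot.unbotD 0 (α.map w).maximum

/-- Maximum weight among items occurring in some sequence of `D` (`0` if none). -/
noncomputable def mxWDB (w : I → ℝ) (D : UDB I) : ℝ :=
  WithBot.unbotD 0 (D.flatten.map fun e => w e.1).maximum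

/-- `wgt^cap`. -/
noncomputable def wgtCap [DecidableEq I] (DB : UDB I) (w : I → ℝ) (α : List I) : ℝ :=
  max (mxWDB w (projDB α.dropLast DB)) (mxWs w α)

/-- Weighted expected support. -/
noncomputable def WES [DecidableEq I] (DB : UDB I) (w : I → ℝ) (α : List I) : ℝ :=
  expSup DB α * sWeight w α

/-- `wExpSup^cap`. -/
noncomputable def wExpSupCap [DecidableEq I] (DB : UDB I) (w : I → ℝ) (α : List I) : ℝ :=
  expSupCap DB α * wgtCap DB w α

/-!
Write `α = γ ++ [i]` and follow an occurrence of `γ ++ [i] ++ β` in `S ∈ DB` item by item. Its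
first entry has probability at most `P̂_DB(γ₀)`, and since the greedy match of `γ₀` ends no later
than this entry, the rest of the occurrence lies in `S|[γ₀]`, a sequence of `DB|[γ₀]`. Iterating,
the occurrence has probability at most `maxPr(γ) · maxPr_{S|γ}([i] ++ β)`, and as probabilities
are at most `1`, dropping `β` can only increase the second factor. Summing over `DB`, the
sequences in which `γ` does not occur contribute `0` and the others are exactly those of `DB|γ`.
-/

theorem List.le_unbotD_maximum_of_mem {α : Type*} [LinearOrder α] {L : List α} {a d : α}
    (ha : a ∈ L) : a ≤ L.maximum.unbotD d :=
  WithBot.le_unbotD (List.le_maximum_of_mem' ha)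

theorem List.unbotD_maximum_le {α : Type*} [LinearOrder α] {L : List α} {c d : α} (hd : d ≤ c)
    (h : ∀ a ∈ L, a ≤ c) : L.maximum.unbotD d ≤ c :=
  (WithBot.unbotD_le_iff fun _ => hd).mpr
    (List.maximum_le_of_forall_le fun a ha => WithBot.coe_le_coe.mpr (h a ha))

theorem List.le_unbotD_maximum {α : Type*} [LinearOrder α] {L : List α} {b d : α} (hd : b ≤ d)
    (h : ∀ a ∈ L, b ≤ a) : b ≤ L.maximum.unbotD d := by
  rcases L.eq_nil_or_concat with rfl | ⟨L', a, rfl⟩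
  · simpa using hd
  · exact (h a (by simp)).trans (List.le_unbotD_maximum_of_mem (by simp))

theorem List.sum_map_filterMap {α β M : Type*} [AddCommMonoid M] (f : α → Option β) (g : β → M)
    (l : List α) : ((l.filterMap f).map g).sum = (l.map fun a => (f a).elim 0 g).sum := by
  induction l with
  | nil => rfl
  | cons a l ih => cases h : f a <;> simp [h, ih]

theorem prod_map_snd_nonneg {o : USeq I} (h : ∀ e ∈ o, 0 ≤ e.2) :
    0 ≤ (o.map Prod.snd).prod :=
  List.prod_nonneg fun _ hp => by
    obtain ⟨e, he, rfl⟩ := List.mem_map.mp hp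
    exact h e he

theorem prod_map_snd_le_one {o : USeq I} (h : ∀ e ∈ o, e.2 ∈ Set.Icc (0 : ℝ) 1) :
    (o.map Prod.snd).prod ≤ 1 := by
  simpa using List.prod_map_le_prod_map₀ Prod.snd (fun _ => (1 : ℝ))
    (fun e he => (h e he).1) (fun e he => (h e he).2)

section
variable [DecidableEq I]

theorem le_maxPrS {S o : USeq I} {α : List I} (hs : o.Sublist S) (hα : o.map Prod.fst = α) :
    (o.map Prod.snd).prod ≤ maxPrS α S :=
  List.le_unbotD_maximum_of_mem (by simpa using ⟨o, ⟨hs, hα⟩, rfl⟩)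

theorem maxPrS_le {S : USeq I} {α : List I} {c : ℝ} (hc : 0 ≤ c)
    (h : ∀ o : USeq I, o.Sublist S → o.map Prod.fst = α → (o.map Prod.snd).prod ≤ c) :
    maxPrS α S ≤ c :=
  List.unbotD_maximum_le hc fun _ hp => by
    obtain ⟨o, ho, rfl⟩ := List.mem_map.mp hp
    simp only [List.mem_filter, List.mem_sublists, decide_eq_true_eq] at ho
    exact h o ho.1 ho.2

theorem maxPrS_nonneg {S : USeq I} {α : List I} (hS : ∀ e ∈ S, 0 ≤ e.2) : 0 ≤ maxPrS α S :=
  List.le_unbotD_maximum le_rfl fun _ hp => by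
    obtain ⟨o, ho, rfl⟩ := List.mem_map.mp hp
    simp only [List.mem_filter, List.mem_sublists] at ho
    exact prod_map_snd_nonneg fun e he => hS e (ho.1.subset he)

theorem maxPrS_append_le {S : USeq I} (hS : ∀ e ∈ S, e.2 ∈ Set.Icc (0 : ℝ) 1) (α β : List I) :
    maxPrS (α ++ β) S ≤ maxPrS α S := by
  apply maxPrS_le (maxPrS_nonneg fun e he => (hS e he).1)
  intro o ho hmap
  have ho' : ∀ e ∈ o, e.2 ∈ Set.Icc (0 : ℝ) 1 := fun e he => hS e (ho.subset he)
  calc (o.map Prod.snd).prod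
      = ((o.take α.length).map Prod.snd).prod * ((o.drop α.length).map Prod.snd).prod := by
        rw [← List.prod_append, ← List.map_append, List.take_append_drop]
    _ ≤ ((o.take α.length).map Prod.snd).prod :=
        mul_le_of_le_one_right (prod_map_snd_nonneg fun e he => (ho' e (List.mem_of_mem_take he)).1)
          (prod_map_snd_le_one fun e he => ho' e (List.mem_of_mem_drop he))
    _ ≤ maxPrS α S :=
        le_maxPrS ((List.take_sublist _ _).trans ho) (by rw [List.map_take, hmap, List.take_left])

theorem le_Phat {D : UDB I} {e : I × ℝ} (he : e ∈ D.flatten) : e.2 ≤ Phat D e.1 :=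
  List.le_unbotD_maximum_of_mem (List.mem_map.mpr ⟨e, List.mem_filter.mpr ⟨he, by simp⟩, rfl⟩)

theorem Phat_nonneg {D : UDB I} {i : I} (hD : ∀ S ∈ D, ∀ e ∈ S, 0 ≤ e.2) : 0 ≤ Phat D i :=
  List.le_unbotD_maximum le_rfl fun _ hp => by
    obtain ⟨e, he, rfl⟩ := List.mem_map.mp hp
    obtain ⟨S, hS, heS⟩ := List.mem_flatten.mp (List.mem_filter.mp he).1
    exact hD S hS e heS

theorem projSeq_sublist : ∀ {α : List I} {S S' : USeq I}, projSeq α S = some S' → S'.Sublist S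
  | [], _, _, h => by
    rw [projSeq, Option.some_inj] at h
    exact h ▸ List.Sublist.refl _
  | _ :: _, [], _, h => by cases h
  | _ :: _, _ :: _, _, h => by
    rw [projSeq] at h
    split at h <;> exact (projSeq_sublist h).cons _

theorem projSeq_cons (i : I) (α : List I) :
    ∀ S : USeq I, projSeq (i :: α) S = (projSeq [i] S).bind (projSeq α)
  | [] => rfl
  | (x, _) :: rest => by
    simp only [projSeq]
    split
    · rfl
    · exact projSeq_cons i α rest

theorem exists_projSeq_singleton_of_cons_sublist {e : I × ℝ} {o : USeq I} :
    ∀ {S : USeq I}, (e :: o).Sublist S → ∃ S', projSeq [e.1] S = some S' ∧ o.Sublist S'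
  | [], h => by simp at h
  | (_, _) :: rest, h => by
    rw [projSeq]
    split
    · exact ⟨rest, by rw [projSeq], h.tail⟩
    · rcases List.sublist_cons_iff.mp h with h | ⟨_, he, _⟩
      · exact exists_projSeq_singleton_of_cons_sublist h
      · simp_all

theorem mem_projDB {α : List I} {DB : UDB I} {S' : USeq I} :
    S' ∈ projDB α DB ↔ ∃ S ∈ DB, projSeq α S = some S' :=
  List.mem_filterMap

theorem projDB_nil (DB : UDB I) : projDB [] DB = DB := by
  simp [projDB, projSeq]

theorem projDB_cons (i : I) (α : List I) (DB : UDB I) :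
    projDB (i :: α) DB = projDB α (projDB [i] DB) := by
  rw [projDB, projDB, projDB, List.filterMap_filterMap]
  exact congrArg (List.filterMap · DB) (funext (projSeq_cons i α))

theorem forall_mem_projDB_of_forall_mem {P : I × ℝ → Prop} {α : List I} {DB : UDB I}
    (hDB : ∀ S ∈ DB, ∀ e ∈ S, P e) : ∀ S' ∈ projDB α DB, ∀ e ∈ S', P e := by
  intro S' hS' e he
  obtain ⟨S, hS, hproj⟩ := mem_projDB.mp hS'
  exact hDB S hS e ((projSeq_sublist hproj).subset he)

theorem maxPrDB_cons (DB : UDB I) (i : I) (α : List I) :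
    maxPrDB DB (i :: α) = Phat DB i * maxPrDB (projDB [i] DB) α := by
  change ∏ k : Fin (α.length + 1), _ = _
  rw [Fin.prod_univ_succ]
  congr 1
  · simp [projDB_nil]
  · exact Finset.prod_congr rfl fun k _ => congrArg₂ Phat (projDB_cons i _ DB) rfl

theorem maxPrDB_nonneg {DB : UDB I} (hDB : ∀ S ∈ DB, ∀ e ∈ S, 0 ≤ e.2) (α : List I) :
    0 ≤ maxPrDB DB α :=
  Finset.prod_nonneg fun _ _ => Phat_nonneg (forall_mem_projDB_of_forall_mem hDB)

theorem exists_projSeq_eq_some_and_prod_le {DB : UDB I} (hDB : ∀ S ∈ DB, ∀ e ∈ S, 0 ≤ e.2)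
    {S o : USeq I} (hS : S ∈ DB) (ho : o.Sublist S) {α δ : List I}
    (hmap : o.map Prod.fst = α ++ δ) :
    ∃ S', projSeq α S = some S' ∧ (o.map Prod.snd).prod ≤ maxPrDB DB α * maxPrS δ S' := by
  induction α generalizing DB S o with
  | nil => exact ⟨S, by rw [projSeq], by simpa [maxPrDB] using le_maxPrS ho hmap⟩
  | cons i α ih =>
    cases o with
    | nil => simp at hmap
    | cons e o =>
      simp only [List.map_cons, List.cons_append, List.cons.injEq] at hmap
      obtain ⟨rfl, hmap⟩ := hmap
      obtain ⟨S₁, hS₁, ho₁⟩ := exists_projSeq_singleton_of_cons_sublist ho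
      obtain ⟨S₂, hS₂, hle⟩ :=
        ih (forall_mem_projDB_of_forall_mem hDB) (mem_projDB.mpr ⟨S, hS, hS₁⟩) ho₁ hmap
      refine ⟨S₂, by rw [projSeq_cons, hS₁, Option.bind_some, hS₂], ?_⟩
      have he : e ∈ S := ho.subset List.mem_cons_self
      have he_le : e.2 ≤ Phat DB e.1 := le_Phat (List.mem_flatten.mpr ⟨S, hS, he⟩)
      rw [List.map_cons, List.prod_cons, maxPrDB_cons, mul_assoc]
      exact mul_le_mul he_le hle
        (prod_map_snd_nonneg fun f hf => hDB S hS f (ho.subset (List.mem_cons_of_mem _ hf)))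
        ((hDB S hS e he).trans he_le)

theorem maxPrS_append_le_elim {DB : UDB I} (hDB : ∀ S ∈ DB, ∀ e ∈ S, 0 ≤ e.2) {S : USeq I}
    (hS : S ∈ DB) (α δ : List I) :
    maxPrS (α ++ δ) S ≤ (projSeq α S).elim 0 fun S' => maxPrDB DB α * maxPrS δ S' := by
  apply maxPrS_le
  · cases h : projSeq α S with
    | none => exact le_rfl
    | some S' =>
      exact mul_nonneg (maxPrDB_nonneg hDB α)
        (maxPrS_nonneg fun e he => hDB S hS e ((projSeq_sublist h).subset he))
  · intro o ho hmap
    obtain ⟨S', hS', hle⟩ := exists_projSeq_eq_some_and_prod_le hDB hS ho hmap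
    simpa [hS'] using hle

theorem expSup_append_le {DB : UDB I} (hDB : ∀ S ∈ DB, ∀ e ∈ S, 0 ≤ e.2) (α δ : List I) :
    expSup DB (α ++ δ) ≤ maxPrDB DB α * ((projDB α DB).map (maxPrS δ)).sum :=
  calc expSup DB (α ++ δ)
      ≤ (DB.map fun S => (projSeq α S).elim 0 fun S' => maxPrDB DB α * maxPrS δ S').sum :=
        List.sum_le_sum fun _ hS => maxPrS_append_le_elim hDB hS α δ
    _ = ((projDB α DB).map fun S' => maxPrDB DB α * maxPrS δ S').sum :=
        (List.sum_map_filterMap _ _ _).symm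
    _ = maxPrDB DB α * ((projDB α DB).map (maxPrS δ)).sum := List.sum_map_mul_left _ _ _

theorem expSupCap_append_singleton (DB : UDB I) (α : List I) (i : I) :
    expSupCap DB (α ++ [i]) = maxPrDB DB α * ((projDB α DB).map (maxPrS [i])).sum := by
  rw [expSupCap, List.getLast?_concat, List.dropLast_concat]

end

/-- If all probabilities of `DB` lie in `[0,1]`, then for every nonempty pattern `α` and
every pattern `β`, `expSup(α ++ β) ≤ expSup^cap(α)`. -/
theorem expSup_append_le_expSupCap [DecidableEq I]
    (DB : UDB I) (hp : ∀ S ∈ DB, ∀ e ∈ S, e.2 ∈ Set.Icc (0 : ℝ) 1)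
    (α : List I) (hα : α ≠ []) (β : List I) :
    expSup DB (α ++ β) ≤ expSupCap DB α := by
  obtain ⟨γ, i, rfl⟩ : ∃ γ i, α = γ ++ [i] :=
    ⟨α.dropLast, α.getLast hα, (List.dropLast_append_getLast hα).symm⟩
  have hDB : ∀ S ∈ DB, ∀ e ∈ S, 0 ≤ e.2 := fun S hS e he => (hp S hS e he).1
  rw [expSupCap_append_singleton, List.append_assoc]
  calc expSup DB (γ ++ ([i] ++ β))
      ≤ maxPrDB DB γ * ((projDB γ DB).map (maxPrS ([i] ++ β))).sum := expSup_append_le hDB γ _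
    _ ≤ maxPrDB DB γ * ((projDB γ DB).map (maxPrS [i])).sum :=
        mul_le_mul_of_nonneg_left
          (List.sum_le_sum fun S' hS' =>
            maxPrS_append_le (forall_mem_projDB_of_forall_mem hp S' hS') [i] β)
          (maxPrDB_nonneg hDB γ)
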